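/- For every y ∈ ℝ^F, the unique minimizer of r ↦ (1/2)‖y − r‖₂² + λ‖r‖₁ over {r ∈ ℝ^F : ‖r‖_∞ ≤ M} is S̃_{λ,M}(y), defined entrywise by: (S̃_{λ,M}(y))_i = 0 if |y_i| < λ; (S̃_{λ,M}(y))_i = y_i − sign(y_i)·λ if λ ≤ |y_i| ≤ λ + M; and (S̃_{λ,M}(y))_i = sign(y_i)·M if |y_i| > λ + M. -/

import Mathlib

/-!
The objective and the constraint separate over coordinates, so it suffices to treat the scalar
problem of minimizing `f(t) = (1/2)(a - t)² + λ|t|` over `|t| ≤ M`. Its solution `s` satisfies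
the first-order condition `a - s ∈ λ ∂|·|(s) + N_{[-M, M]}(s)`, i.e.
`(s - a)(t - s) + λ(|t| - |s|) ≥ 0` for all `|t| ≤ M`, which is checked case by case. Since the
quadratic term is 1-strongly convex, the gap `f(t) - f(s) - (1/2)(t - s)²` is exactly this
expression. Summed over coordinates, `f(s) + (1/2)‖r - s‖² ≤ f(r)` for every feasible `r`, which
gives minimality and uniqueness at once.
-/

noncomputable section

/-- The truncated soft-thresholding operator `S̃_{λ,M}`, applied entrywise:
`(S̃_{λ,M}(y))_i = 0` if `|y_i| < λ`; `y_i − sign(y_i)·λ` if `λ ≤ |y_i| ≤ λ + M`;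
and `sign(y_i)·M` if `|y_i| > λ + M`. -/
def truncSoftThresh (lam M : ℝ) {F : ℕ} (y : EuclideanSpace ℝ (Fin F)) :
    EuclideanSpace ℝ (Fin F) :=
  (WithLp.equiv 2 _).symm (fun i =>
    if |y i| < lam then 0
    else if |y i| ≤ lam + M then y i - Real.sign (y i) * lam
    else Real.sign (y i) * M)

def truncSoftThreshScalar (lam M a : ℝ) : ℝ :=
  if |a| < lam then 0
  else if |a| ≤ lam + M then a - Real.sign a * lam
  else Real.sign a * M

def lassoObjective {ι : Type*} [Fintype ι] (lam : ℝ) (y r : EuclideanSpace ℝ ι) : ℝ :=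
  (1/2) * ‖y - r‖ ^ 2 + lam * ∑ i, |r i|

section truncSoftThreshScalar

variable {lam M : ℝ}

theorem abs_truncSoftThreshScalar_le (hM : 0 ≤ M) (a : ℝ) :
    |truncSoftThreshScalar lam M a| ≤ M := by
  unfold truncSoftThreshScalar
  rcases lt_trichotomy a 0 with ha | rfl | ha
  · simp only [Real.sign_of_neg ha, abs_of_neg ha]
    split_ifs <;> rw [abs_le] <;> constructor <;> linarith
  · simp [hM]
  · simp only [Real.sign_of_pos ha, abs_of_pos ha]
    split_ifs <;> rw [abs_le] <;> constructor <;> linarith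

theorem truncSoftThreshScalar_optimality (hlam : 0 ≤ lam) (a : ℝ) {t : ℝ} (ht : |t| ≤ M) :
    0 ≤ (truncSoftThreshScalar lam M a - a) * (t - truncSoftThreshScalar lam M a)
      + lam * (|t| - |truncSoftThreshScalar lam M a|) := by
  obtain ⟨htl, htr⟩ := abs_le.mp ht
  have ht₁ : -t ≤ |t| := neg_le_abs t
  have ht₂ : t ≤ |t| := le_abs_self t
  unfold truncSoftThreshScalar
  rcases lt_trichotomy a 0 with ha | rfl | ha
  · simp only [Real.sign_of_neg ha, abs_of_neg ha]
    split_ifs with h₁ h₂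
    · simp only [abs_zero, sub_zero, zero_sub]
      nlinarith [mul_le_mul_of_nonneg_right h₁.le (abs_nonneg t)]
    · rw [abs_of_nonpos (show a - -1 * lam ≤ 0 by linarith)]; nlinarith
    · rw [abs_of_nonpos (show -1 * M ≤ 0 by linarith)]; nlinarith
  · simp only [Real.sign_zero]
    split_ifs <;> simp <;> positivity
  · simp only [Real.sign_of_pos ha, abs_of_pos ha]
    split_ifs with h₁ h₂
    · simp only [abs_zero, sub_zero, zero_sub]
      nlinarith [mul_le_mul_of_nonneg_right h₁.le (abs_nonneg t)]
    · rw [abs_of_nonneg (show 0 ≤ a - 1 * lam by linarith)]; nlinarith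
    · rw [abs_of_nonneg (show 0 ≤ 1 * M by linarith)]; nlinarith

theorem truncSoftThreshScalar_add_half_sq_le (hlam : 0 ≤ lam) (a : ℝ) {t : ℝ} (ht : |t| ≤ M) :
    (1/2) * (a - truncSoftThreshScalar lam M a) ^ 2 + lam * |truncSoftThreshScalar lam M a|
      + (1/2) * (t - truncSoftThreshScalar lam M a) ^ 2 ≤ (1/2) * (a - t) ^ 2 + lam * |t| := by
  have h := truncSoftThreshScalar_optimality hlam a ht
  set s := truncSoftThreshScalar lam M a
  have hgap : (1/2) * (a - t) ^ 2 + lam * |t| - ((1/2) * (a - s) ^ 2 + lam * |s|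
      + (1/2) * (t - s) ^ 2) = (s - a) * (t - s) + lam * (|t| - |s|) := by ring
  linarith

end truncSoftThreshScalar

theorem lassoObjective_add_half_sq_le {ι : Type*} [Fintype ι] {lam : ℝ}
    {y s r : EuclideanSpace ℝ ι}
    (h : ∀ i, (1/2) * (y i - s i) ^ 2 + lam * |s i| + (1/2) * (r i - s i) ^ 2
      ≤ (1/2) * (y i - r i) ^ 2 + lam * |r i|) :
    lassoObjective lam y s + (1/2) * ‖r - s‖ ^ 2 ≤ lassoObjective lam y r := by
  simp only [lassoObjective, EuclideanSpace.real_norm_sq_eq, PiLp.sub_apply, Finset.mul_sum,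
    ← Finset.sum_add_distrib]
  exact Finset.sum_le_sum fun i _ => h i

theorem lassoObjective_truncSoftThresh_add_half_sq_le {lam M : ℝ} (hlam : 0 ≤ lam) {F : ℕ}
    (y : EuclideanSpace ℝ (Fin F)) {r : EuclideanSpace ℝ (Fin F)} (hr : ∀ i, |r i| ≤ M) :
    lassoObjective lam y (truncSoftThresh lam M y) + (1/2) * ‖r - truncSoftThresh lam M y‖ ^ 2
      ≤ lassoObjective lam y r :=
  lassoObjective_add_half_sq_le fun i => truncSoftThreshScalar_add_half_sq_le hlam (y i) (hr i)

theorem truncated_soft_thresholding_is_prox_general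
    (F : ℕ) (lam M : ℝ) (hlam : 0 < lam) (hM : 0 < M)
    (y : EuclideanSpace ℝ (Fin F)) :
    (∀ i, |truncSoftThresh lam M y i| ≤ M) ∧
    (∀ r : EuclideanSpace ℝ (Fin F), (∀ i, |r i| ≤ M) →
      (1/2) * ‖y - truncSoftThresh lam M y‖ ^ 2 + lam * ∑ i, |truncSoftThresh lam M y i|
        ≤ (1/2) * ‖y - r‖ ^ 2 + lam * ∑ i, |r i|) ∧
    (∀ r : EuclideanSpace ℝ (Fin F), (∀ i, |r i| ≤ M) →
      (1/2) * ‖y - r‖ ^ 2 + lam * ∑ i, |r i|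
        = (1/2) * ‖y - truncSoftThresh lam M y‖ ^ 2 + lam * ∑ i, |truncSoftThresh lam M y i| →
      r = truncSoftThresh lam M y) := by
  refine ⟨fun i => abs_truncSoftThreshScalar_le hM.le (y i), fun r hr => ?_, fun r hr heq => ?_⟩
  · exact le_of_add_le_of_nonneg_left (lassoObjective_truncSoftThresh_add_half_sq_le hlam.le y hr)
      (by positivity)
  · have h := lassoObjective_truncSoftThresh_add_half_sq_le hlam.le y hr
    change lassoObjective lam y r = lassoObjective lam y (truncSoftThresh lam M y) at heq
    rw [heq, add_le_iff_nonpos_right] at h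
    have hdist : ‖r - truncSoftThresh lam M y‖ ^ 2 ≤ 0 := by linarith
    rwa [sq_nonpos_iff, norm_eq_zero, sub_eq_zero] at hdist

/-- Lemma S-3: for every `y ∈ ℝ^F`, the unique minimizer of
`r ↦ (1/2)‖y − r‖₂² + λ‖r‖₁` over `{r : ‖r‖_∞ ≤ M}` is `S̃_{λ,M}(y)`. -/
theorem truncated_soft_thresholding_is_prox
    (F : ℕ) (hF : 1 ≤ F) (lam M : ℝ) (hlam : 0 < lam) (hM : 0 < M)
    (y : EuclideanSpace ℝ (Fin F)) :
    (∀ i, |truncSoftThresh lam M y i| ≤ M) ∧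
    (∀ r : EuclideanSpace ℝ (Fin F), (∀ i, |r i| ≤ M) →
      (1/2) * ‖y - truncSoftThresh lam M y‖ ^ 2 + lam * ∑ i, |truncSoftThresh lam M y i|
        ≤ (1/2) * ‖y - r‖ ^ 2 + lam * ∑ i, |r i|) ∧
    (∀ r : EuclideanSpace ℝ (Fin F), (∀ i, |r i| ≤ M) →
      (1/2) * ‖y - r‖ ^ 2 + lam * ∑ i, |r i|
        = (1/2) * ‖y - truncSoftThresh lam M y‖ ^ 2 + lam * ∑ i, |truncSoftThresh lam M y i| →
      r = truncSoftThresh lam M y) :=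
  truncated_soft_thresholding_is_prox_general F lam M hlam hM y
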